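/- Let X ∈ ℝ^{n×r} with n ≤ r and suppose the rows of X are pairwise orthogonal with equal nonzero norm. Then XᵀX has exactly n equal nonzero eigenvalues, and for any p < n, the optimal value min_{WᵀW=I_p} ‖X − X W Wᵀ‖_F² equals (1 − p/n)‖X‖_F², i.e., no p-dimensional basis can reduce the relative reconstruction error below 1 − p/n. -/

import Mathlib

/-!
Orthogonal rows of common squared norm `c` mean `X Xᵀ = c • 1`. Hence `S = Xᵀ X` satisfies
`S² = c • S`, so every eigenvalue of `S` is `c` or `0`, and `trace S = trace (X Xᵀ) = n c` says
that exactly `n` of them equal `c`. For `W` with orthonormal columns, expanding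
`‖c • M - M A Aᵀ‖²` (where `Aᵀ A = c • 1`) gives Pythagoras `‖X - X W Wᵀ‖² = ‖X‖² - ‖X W‖²`
for `A = W`, and `‖X W‖² = ‖Wᵀ Xᵀ‖² ≤ c ‖Wᵀ‖² = c p` for `A = Xᵀ`. The bound is attained by
`W = Xᵀ E / √c`, where `E` picks `p` coordinate vectors of `ℝⁿ`.
-/

open Matrix BigOperators

/-- Squared Frobenius norm of a real matrix. -/
noncomputable def frobSq {n r : ℕ} (M : Matrix (Fin n) (Fin r) ℝ) : ℝ :=
  ∑ i, ∑ j, (M i j) ^ 2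

lemma Finset.sum_eq_card_filter_eq_nsmul {ι M : Type*} [AddCommMonoid M] [DecidableEq M]
    {s : Finset ι} {f : ι → M} {c : M} (h : ∀ i ∈ s, f i = c ∨ f i = 0) :
    ∑ i ∈ s, f i = (s.filter fun i => f i = c).card • c := by
  rw [← Finset.sum_filter_add_sum_filter_not s (f · = c),
    Finset.sum_eq_card_nsmul fun i hi => (Finset.mem_filter.1 hi).2,
    Finset.sum_eq_zero fun i hi => (h i (Finset.mem_filter.1 hi).1).resolve_left
      (Finset.mem_filter.1 hi).2, add_zero]

lemma Matrix.IsHermitian.eigenvalues_eq_or_eq_zero {𝕜 ι : Type*} [RCLike 𝕜] [Fintype ι]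
    [DecidableEq ι] {S : Matrix ι ι 𝕜} (hS : S.IsHermitian) {c : ℝ} (hSS : S * S = c • S)
    (i : ι) : hS.eigenvalues i = c ∨ hS.eigenvalues i = 0 := by
  set v : ι → 𝕜 := (hS.eigenvectorBasis i).ofLp
  have hv : S *ᵥ v = hS.eigenvalues i • v := hS.mulVec_eigenvectorBasis i
  have hv0 : v ≠ 0 := by
    simpa [v] using hS.eigenvectorBasis.orthonormal.ne_zero i
  have key : (hS.eigenvalues i * hS.eigenvalues i) • v = (c * hS.eigenvalues i) • v := by
    rw [← smul_smul, ← hv, ← mulVec_smul, ← hv, mulVec_mulVec, hSS, smul_mulVec, hv, smul_smul]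
  have hroot : (hS.eigenvalues i - c) * hS.eigenvalues i = 0 := by
    linear_combination smul_left_injective ℝ hv0 key
  simpa [sub_eq_zero] using hroot

lemma Matrix.mul_transpose_self_eq_smul_one {m k R : Type*} [Fintype k] [DecidableEq m]
    [Semiring R] {X : Matrix m k R} {c : R} (horth : ∀ i i', i ≠ i' → ∑ t, X i t * X i' t = 0)
    (hrow : ∀ i, ∑ t, X i t ^ 2 = c) : X * Xᵀ = c • 1 := by
  ext i i'
  rcases eq_or_ne i i' with rfl | h
  · simp [mul_apply, ← sq, hrow]
  · simp [mul_apply, h, horth i i' h]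

lemma Matrix.transpose_mul_self_mul_self_eq_smul {m k R : Type*} [Fintype m] [Fintype k]
    [DecidableEq m] [CommSemiring R] {X : Matrix m k R} {c : R} (hX : X * Xᵀ = c • 1) :
    (Xᵀ * X) * (Xᵀ * X) = c • (Xᵀ * X) := by
  rw [Matrix.mul_assoc, ← Matrix.mul_assoc X, hX, smul_mul, Matrix.one_mul, Matrix.mul_smul]

lemma Matrix.exists_transpose_mul_self_eq_one {R : Type*} [Semiring R] {m k : ℕ} (h : k ≤ m) :
    ∃ E : Matrix (Fin m) (Fin k) R, Eᵀ * E = 1 := by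
  refine ⟨(1 : Matrix (Fin m) (Fin m) R).submatrix id (Fin.castLE h), ?_⟩
  rw [transpose_submatrix, transpose_one, ← submatrix_mul _ _ _ id _ Function.bijective_id,
    Matrix.one_mul, submatrix_one _ (Fin.castLE_injective h)]

section Frobenius

variable {m k l : ℕ}

lemma frobSq_nonneg (M : Matrix (Fin m) (Fin k) ℝ) : 0 ≤ frobSq M := by
  unfold frobSq; positivity

lemma frobSq_eq_trace_mul_transpose (M : Matrix (Fin m) (Fin k) ℝ) :
    frobSq M = (M * Mᵀ).trace := by
  simp [frobSq, trace, mul_apply, sq]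

lemma frobSq_transpose (M : Matrix (Fin m) (Fin k) ℝ) : frobSq Mᵀ = frobSq M := by
  rw [frobSq_eq_trace_mul_transpose, frobSq_eq_trace_mul_transpose, transpose_transpose,
    trace_mul_comm]

lemma frobSq_smul (a : ℝ) (M : Matrix (Fin m) (Fin k) ℝ) : frobSq (a • M) = a ^ 2 * frobSq M := by
  simp [frobSq, mul_pow, Finset.mul_sum]

lemma frobSq_eq_of_transpose_mul_self_eq_one {E : Matrix (Fin m) (Fin k) ℝ} (hE : Eᵀ * E = 1) :
    frobSq E = k := by
  rw [← frobSq_transpose, frobSq_eq_trace_mul_transpose, transpose_transpose, hE, trace_one,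
    Fintype.card_fin]

lemma frobSq_smul_sub_mul_mul_transpose {A : Matrix (Fin k) (Fin l) ℝ} {c : ℝ}
    (hA : Aᵀ * A = c • 1) (M : Matrix (Fin m) (Fin k) ℝ) :
    frobSq (c • M - M * A * Aᵀ) = c * (c * frobSq M - frobSq (M * A)) := by
  have hPM : M * A * Aᵀ * Mᵀ = M * A * (M * A)ᵀ := by
    simp only [transpose_mul, Matrix.mul_assoc]
  have hMP : M * (M * A * Aᵀ)ᵀ = M * A * (M * A)ᵀ := by
    simp only [transpose_mul, transpose_transpose, Matrix.mul_assoc]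
  have hPP : M * A * Aᵀ * (M * A * Aᵀ)ᵀ = c • (M * A * (M * A)ᵀ) := by
    simp only [transpose_mul, transpose_transpose, Matrix.mul_assoc]
    rw [← Matrix.mul_assoc Aᵀ A, hA, Matrix.smul_mul, Matrix.one_mul, Matrix.mul_smul,
      Matrix.mul_smul]
  simp only [frobSq_eq_trace_mul_transpose, transpose_sub, transpose_smul, Matrix.sub_mul,
    Matrix.mul_sub, Matrix.smul_mul, Matrix.mul_smul, hPM, hMP, hPP, trace_sub, trace_smul,
    smul_eq_mul]
  ring

lemma frobSq_sub_mul_mul_transpose {W : Matrix (Fin k) (Fin l) ℝ} (hW : Wᵀ * W = 1)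
    (M : Matrix (Fin m) (Fin k) ℝ) :
    frobSq (M - M * W * Wᵀ) = frobSq M - frobSq (M * W) := by
  simpa using frobSq_smul_sub_mul_mul_transpose (c := 1) (by rwa [one_smul]) M

lemma frobSq_mul_le {A : Matrix (Fin k) (Fin l) ℝ} {c : ℝ} (hc : 0 < c)
    (hA : Aᵀ * A = c • 1) (M : Matrix (Fin m) (Fin k) ℝ) :
    frobSq (M * A) ≤ c * frobSq M := by
  have h := frobSq_smul_sub_mul_mul_transpose hA M ▸ frobSq_nonneg (c • M - M * A * Aᵀ)
  linarith [(mul_nonneg_iff_of_pos_left hc).1 h]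

lemma exists_transpose_mul_self_eq_one_frobSq_mul_eq {X : Matrix (Fin m) (Fin k) ℝ} {c : ℝ}
    (hc : 0 < c) (hX : X * Xᵀ = c • 1) (hl : l ≤ m) :
    ∃ W : Matrix (Fin k) (Fin l) ℝ, Wᵀ * W = 1 ∧ frobSq (X * W) = c * l := by
  obtain ⟨E, hE⟩ := exists_transpose_mul_self_eq_one (R := ℝ) hl
  have hXW : X * ((√c)⁻¹ • Xᵀ * E) = √c • E := by
    rw [Matrix.smul_mul, Matrix.mul_smul, ← Matrix.mul_assoc, hX, Matrix.smul_mul,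
      Matrix.one_mul, smul_smul, inv_mul_eq_div, Real.div_sqrt]
  refine ⟨(√c)⁻¹ • Xᵀ * E, ?_, ?_⟩
  · rw [transpose_mul, transpose_smul, transpose_transpose, Matrix.mul_assoc, Matrix.smul_mul,
      Matrix.mul_smul, hXW, Matrix.mul_smul, hE, smul_smul,
      inv_mul_cancel₀ (Real.sqrt_pos.2 hc).ne', one_smul]
  · rw [hXW, frobSq_smul, frobSq_eq_of_transpose_mul_self_eq_one hE, Real.sq_sqrt hc.le]

end Frobenius

theorem rmm_orthogonal_rows_worst_case_general {n r p : ℕ} (hp : p < n)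
    (X : Matrix (Fin n) (Fin r) ℝ) (hS : (Xᵀ * X).IsHermitian)
    (horth : ∀ i i' : Fin n, i ≠ i' → (∑ t, X i t * X i' t) = 0)
    (hnorm : ∀ i i' : Fin n, (∑ t, (X i t) ^ 2) = ∑ t, (X i' t) ^ 2)
    (hnz : ∀ i : Fin n, (∑ t, (X i t) ^ 2) ≠ 0) :
    (∃ c : ℝ, c ≠ 0 ∧
      (Finset.univ.filter fun i : Fin r => hS.eigenvalues i = c).card = n ∧
      ∀ i : Fin r, hS.eigenvalues i = c ∨ hS.eigenvalues i = 0) ∧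
    IsLeast {e : ℝ | ∃ W : Matrix (Fin r) (Fin p) ℝ,
        Wᵀ * W = 1 ∧ e = frobSq (X - X * W * Wᵀ)}
      ((1 - (p : ℝ) / n) * frobSq X) := by
  have hn : 0 < n := p.zero_le.trans_lt hp
  set c := ∑ t, X ⟨0, hn⟩ t ^ 2
  have hc : 0 < c := (Finset.sum_nonneg fun t _ => sq_nonneg _).lt_of_ne (hnz _).symm
  have hX : X * Xᵀ = c • 1 := mul_transpose_self_eq_smul_one horth fun i => hnorm i _
  have htrace : (X * Xᵀ).trace = n * c := by simp [hX, mul_comm]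
  have hfrob : frobSq X = n * c := by rw [frobSq_eq_trace_mul_transpose, htrace]
  have hval : (1 - (p : ℝ) / n) * frobSq X = frobSq X - c * p := by
    rw [hfrob]
    field_simp
  have heig := hS.eigenvalues_eq_or_eq_zero (transpose_mul_self_mul_self_eq_smul hX)
  refine ⟨⟨c, hc.ne', ?_, heig⟩, ?_, ?_⟩
  · have hsum := hS.trace_eq_sum_eigenvalues
    rw [trace_mul_comm, htrace] at hsum
    simp only [RCLike.ofReal_real_eq_id, id_eq] at hsum
    rw [Finset.sum_eq_card_filter_eq_nsmul fun i _ => heig i] at hsum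
    simpa [hc.ne'] using hsum.symm
  · obtain ⟨W, hW, hXW⟩ := exists_transpose_mul_self_eq_one_frobSq_mul_eq hc hX hp.le
    exact ⟨W, hW, by rw [frobSq_sub_mul_mul_transpose hW, hXW, hval]⟩
  · rintro _ ⟨W, hW, rfl⟩
    have hbound := frobSq_mul_le hc (A := Xᵀ) (by rwa [transpose_transpose]) Wᵀ
    rw [← transpose_mul, frobSq_transpose, frobSq_transpose,
      frobSq_eq_of_transpose_mul_self_eq_one hW] at hbound
    rw [frobSq_sub_mul_mul_transpose hW, hval]
    linarith

/-- Worst case for RMM: if the rows of `X ∈ ℝ^{n×r}` (with `n ≤ r`) are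
pairwise orthogonal with equal nonzero norm, then `XᵀX` has exactly `n` equal
nonzero eigenvalues (all other eigenvalues being zero), and for `p < n` the
optimal value `min_{WᵀW = I_p} ‖X − X W Wᵀ‖_F²` equals `(1 − p/n)‖X‖_F²`. -/
theorem rmm_orthogonal_rows_worst_case {n r p : ℕ} (hnr : n ≤ r) (hp : p < n)
    (X : Matrix (Fin n) (Fin r) ℝ) (hS : (Xᵀ * X).IsHermitian)
    (horth : ∀ i i' : Fin n, i ≠ i' → (∑ t, X i t * X i' t) = 0)
    (hnorm : ∀ i i' : Fin n, (∑ t, (X i t) ^ 2) = ∑ t, (X i' t) ^ 2)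
    (hnz : ∀ i : Fin n, (∑ t, (X i t) ^ 2) ≠ 0) :
    (∃ c : ℝ, c ≠ 0 ∧
      (Finset.univ.filter fun i : Fin r => hS.eigenvalues i = c).card = n ∧
      ∀ i : Fin r, hS.eigenvalues i = c ∨ hS.eigenvalues i = 0) ∧
    IsLeast {e : ℝ | ∃ W : Matrix (Fin r) (Fin p) ℝ,
        Wᵀ * W = 1 ∧ e = frobSq (X - X * W * Wᵀ)}
      ((1 - (p : ℝ) / n) * frobSq X) :=
  rmm_orthogonal_rows_worst_case_general hp X hS horth hnorm hnz
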